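/- A stellar subdivision preserves the boundary: if K is a complex with ∂K = 0 and K̂ = (A a)K is a stellar subdivision of K at a fresh vertex a, then ∂K̂ = 0. -/

import Mathlib

open Finset

/-- A `Chain` is a formal `ℤ/2`-sum of simplexes (finite sets of integer vertices). -/
abbrev Chain : Type := (Finset ℕ) →₀ ZMod 2

/-- Boundary of a single simplex: the sum of its codimension-1 faces. -/
noncomputable def sbnd (s : Finset ℕ) : Chain :=
  ∑ i ∈ s, Finsupp.single (s.erase i) 1

/-- The `ℤ/2` boundary operator, extended linearly to chains. -/
noncomputable def bnd (C : Chain) : Chain :=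
  C.sum fun s c => c • sbnd s

/-- Join of chains, defined bilinearly by union of vertex sets on simplexes. -/
noncomputable def joinC (K L : Chain) : Chain :=
  K.sum fun A a => L.sum fun B b => Finsupp.single (A ∪ B) (a * b)

/-- The link `lk(A,K)`. -/
noncomputable def lkC (A : Finset ℕ) (K : Chain) : Chain :=
  K.sum fun g c => if A ⊆ g then Finsupp.single (g \ A) c else 0

/-- `Q(A,K)`: the sum of generators of `K` not containing `A`. -/
noncomputable def QC (A : Finset ℕ) (K : Chain) : Chain :=
  K.sum fun g c => if A ⊆ g then 0 else Finsupp.single g c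

/-- Stellar subdivision `(A a)K = a ⋆ ∂A ⋆ lk(A,K) + Q(A,K)`. -/
noncomputable def subdivC (A : Finset ℕ) (a : ℕ) (K : Chain) : Chain :=
  joinC (Finsupp.single {a} 1) (joinC (sbnd A) (lkC A K)) + QC A K

/-- Stellar weld `(A a)⁻¹ K = A ⋆ B + Q(a,K)` (for `lk(a,K) = ∂A ⋆ B`). -/
noncomputable def weldC (A : Finset ℕ) (a : ℕ) (B K : Chain) : Chain :=
  joinC (Finsupp.single A 1) B + QC {a} K

/-- Relabeling of vertices by a map `f`. -/
noncomputable def renameC (f : ℕ → ℕ) (K : Chain) : Chain :=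
  K.sum fun g c => Finsupp.single (g.image f) c

/-- The set of vertices of a chain. -/
def vertsC (K : Chain) : Finset ℕ := K.support.sup id

/-- A stellar move: a subdivision, a weld, or a bijective relabeling of vertices. -/
inductive StellarMove : Chain → Chain → Prop
  | subdiv (A : Finset ℕ) (a : ℕ) (K : Chain)
      (hA : ∃ g ∈ K.support, A ⊆ g) (hA' : A.Nonempty)
      (ha : ∀ g ∈ K.support, a ∉ g) :
      StellarMove K (subdivC A a K)
  | weld (A : Finset ℕ) (a : ℕ) (B K : Chain)
      (hlk : lkC {a} K = joinC (sbnd A) B)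
      (hA : ∀ g ∈ K.support, ¬ A ⊆ g) (hA' : A.Nonempty) :
      StellarMove K (weldC A a B K)
  | relabel (f : ℕ → ℕ) (hf : Function.Bijective f) (K : Chain) :
      StellarMove K (renameC f K)

/-- Stellar equivalence: a finite sequence of stellar moves. -/
def StellarEquiv : Chain → Chain → Prop := Relation.ReflTransGen StellarMove

/-! Write `L = lk(A,K)`. Sorting the simplexes of `K` by whether they contain `A` gives
`K = A ⋆ L + Q(A,K)`. The boundary commutes with taking links, so `∂L = 0`, and the Leibniz rule
for joins of vertex-disjoint chains gives `∂Q(A,K) = ∂(A ⋆ L) = ∂A ⋆ L`. Since `a` is not a vertex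
of the cycle `∂A ⋆ L`, the cone `a ⋆ ∂A ⋆ L` has boundary `∂A ⋆ L` too, and over `ℤ/2` the two
boundaries cancel. -/

open Finsupp (single)

namespace Chain

theorem add_self (x : Chain) : x + x = 0 := by
  ext s
  exact CharTwo.add_self_eq_zero (x s)

theorem eq_of_add_eq_zero {x y : Chain} (h : x + y = 0) : y = x := by
  rw [← neg_eq_of_add_eq_zero_right h, neg_eq_of_add_eq_zero_right (add_self x)]

theorem sum_support_single (X : Chain) : ∑ s ∈ X.support, single s 1 = X := by
  have h : ∀ c : ZMod 2, c ≠ 0 → c = 1 := by decide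
  conv_rhs => rw [← X.sum_single]
  exact sum_congr rfl fun s hs => by rw [h _ (Finsupp.mem_support_iff.1 hs)]

end Chain

theorem bnd_add (C D : Chain) : bnd (C + D) = bnd C + bnd D :=
  Finsupp.sum_add_index' (fun _ => zero_smul _ _) fun _ _ _ => add_smul _ _ _

theorem bnd_zero : bnd 0 = 0 := Finsupp.sum_zero_index

theorem bnd_sum {ι : Type*} (s : Finset ι) (f : ι → Chain) :
    bnd (∑ i ∈ s, f i) = ∑ i ∈ s, bnd (f i) :=
  map_sum (AddMonoidHom.mk' bnd bnd_add) f s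

theorem bnd_single_one (s : Finset ℕ) : bnd (single s 1) = sbnd s := by
  rw [bnd, Finsupp.sum_single_index (zero_smul _ (sbnd s)), one_smul]

theorem lkC_add (A : Finset ℕ) (K L : Chain) : lkC A (K + L) = lkC A K + lkC A L :=
  Finsupp.sum_add_index' (fun _ => by simp) fun _ _ _ => by split_ifs <;> simp

theorem lkC_sum (A : Finset ℕ) {ι : Type*} (s : Finset ι) (f : ι → Chain) :
    lkC A (∑ i ∈ s, f i) = ∑ i ∈ s, lkC A (f i) :=
  map_sum (AddMonoidHom.mk' (lkC A) (lkC_add A)) f s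

theorem lkC_zero (A : Finset ℕ) : lkC A 0 = 0 := Finsupp.sum_zero_index

theorem lkC_single_one (A g : Finset ℕ) :
    lkC A (single g 1) = if A ⊆ g then single (g \ A) 1 else 0 :=
  Finsupp.sum_single_index (by simp)

theorem QC_add (A : Finset ℕ) (K L : Chain) : QC A (K + L) = QC A K + QC A L :=
  Finsupp.sum_add_index' (fun _ => by simp) fun _ _ _ => by split_ifs <;> simp

theorem QC_sum (A : Finset ℕ) {ι : Type*} (s : Finset ι) (f : ι → Chain) :
    QC A (∑ i ∈ s, f i) = ∑ i ∈ s, QC A (f i) :=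
  map_sum (AddMonoidHom.mk' (QC A) (QC_add A)) f s

theorem QC_single_one (A g : Finset ℕ) : QC A (single g 1) = if A ⊆ g then 0 else single g 1 :=
  Finsupp.sum_single_index (by simp)

theorem joinC_add_left (K K' L : Chain) : joinC (K + K') L = joinC K L + joinC K' L :=
  Finsupp.sum_add_index' (fun _ => by simp) fun _ _ _ => by
    simp [add_mul, Finsupp.single_add, Finsupp.sum_add]

theorem joinC_add_right (K L L' : Chain) : joinC K (L + L') = joinC K L + joinC K L' := by
  rw [joinC, joinC, joinC, ← Finsupp.sum_add]
  exact Finsupp.sum_congr fun _ _ => Finsupp.sum_add_index' (fun _ => by simp)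
    fun _ _ _ => by simp [mul_add, Finsupp.single_add]

theorem joinC_sum_left {ι : Type*} (s : Finset ι) (f : ι → Chain) (L : Chain) :
    joinC (∑ i ∈ s, f i) L = ∑ i ∈ s, joinC (f i) L :=
  map_sum (AddMonoidHom.mk' (joinC · L) fun K K' => joinC_add_left K K' L) f s

theorem joinC_sum_right {ι : Type*} (s : Finset ι) (K : Chain) (f : ι → Chain) :
    joinC K (∑ i ∈ s, f i) = ∑ i ∈ s, joinC K (f i) :=
  map_sum (AddMonoidHom.mk' (joinC K) (joinC_add_right K)) f s

theorem joinC_zero_left (L : Chain) : joinC 0 L = 0 := Finsupp.sum_zero_index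

theorem joinC_zero_right (K : Chain) : joinC K 0 = 0 := by
  simp [joinC]

theorem joinC_single_one (s t : Finset ℕ) :
    joinC (single s 1) (single t 1) = single (s ∪ t) 1 := by
  rw [joinC, Finsupp.sum_single_index (by simp), Finsupp.sum_single_index (by simp), mul_one]

theorem joinC_single_empty (X : Chain) : joinC (single ∅ 1) X = X := by
  conv_lhs => rw [← X.sum_support_single]
  simp only [joinC_sum_right, joinC_single_one, empty_union]
  exact X.sum_support_single

theorem sbnd_singleton (a : ℕ) : sbnd {a} = single ∅ 1 := by
  rw [sbnd, sum_singleton, erase_singleton]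

theorem vertsC_single_one (s : Finset ℕ) : vertsC (single s 1) = s := by
  rw [vertsC, Finsupp.support_single s one_ne_zero, sup_singleton, id]

theorem subset_of_mem_support_sbnd {A t : Finset ℕ} (ht : t ∈ (sbnd A).support) : t ⊆ A := by
  obtain ⟨i, -, hi⟩ := Finsupp.mem_support_finsetSum t ht
  rw [Finsupp.support_single _ one_ne_zero, mem_singleton] at hi
  exact hi ▸ erase_subset i A

theorem exists_of_mem_support_lkC {A t : Finset ℕ} {K : Chain} (ht : t ∈ (lkC A K).support) :
    ∃ g ∈ K.support, A ⊆ g ∧ g \ A = t := by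
  obtain ⟨g, hg, hgt⟩ := Finsupp.mem_support_finsetSum t ht
  simp only at hgt
  split_ifs at hgt with hAg
  · exact ⟨g, hg, hAg, (mem_singleton.1 (Finsupp.support_single_subset hgt)).symm⟩
  · simp at hgt

theorem exists_of_mem_support_joinC {X Y : Chain} {u : Finset ℕ}
    (hu : u ∈ (joinC X Y).support) :
    ∃ s ∈ X.support, ∃ t ∈ Y.support, s ∪ t = u := by
  obtain ⟨s, hs, hsu⟩ := Finsupp.mem_support_finsetSum u hu
  obtain ⟨t, ht, htu⟩ := Finsupp.mem_support_finsetSum u hsu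
  exact ⟨s, hs, t, ht, (mem_singleton.1 (Finsupp.support_single_subset htu)).symm⟩

theorem vertsC_sbnd_subset (A : Finset ℕ) : vertsC (sbnd A) ⊆ A :=
  Finset.sup_le fun _ ht => subset_of_mem_support_sbnd ht

theorem disjoint_vertsC_lkC (A : Finset ℕ) (K : Chain) : Disjoint A (vertsC (lkC A K)) :=
  Finset.disjoint_sup_right.2 fun _ ht => by
    obtain ⟨g, -, -, rfl⟩ := exists_of_mem_support_lkC ht
    exact disjoint_sdiff

theorem vertsC_joinC_sbnd_lkC_subset (A : Finset ℕ) (K : Chain) :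
    vertsC (joinC (sbnd A) (lkC A K)) ⊆ vertsC K := by
  refine Finset.sup_le fun u hu => ?_
  obtain ⟨s, hs, t, ht, rfl⟩ := exists_of_mem_support_joinC hu
  obtain ⟨g, hg, hAg, rfl⟩ := exists_of_mem_support_lkC ht
  have hsg : s ∪ g \ A ⊆ g :=
    union_subset ((subset_of_mem_support_sbnd hs).trans hAg) sdiff_subset
  exact hsg.trans (le_sup (f := id) hg)

theorem sbnd_union {s t : Finset ℕ} (h : Disjoint s t) :
    sbnd (s ∪ t) = joinC (sbnd s) (single t 1) + joinC (single s 1) (sbnd t) := by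
  rw [sbnd, sum_union h, sbnd, sbnd, joinC_sum_left, joinC_sum_right]
  congr 1 <;> refine sum_congr rfl fun i hi => ?_ <;> rw [joinC_single_one, erase_union_distrib]
  · rw [erase_eq_of_notMem (disjoint_left.1 h hi)]
  · rw [erase_eq_of_notMem (disjoint_right.1 h hi)]

theorem bnd_sbnd (A : Finset ℕ) : bnd (sbnd A) = 0 := by
  simp only [sbnd, bnd_sum, bnd_single_one]
  rw [sum_sigma']
  -- the face `(A.erase i).erase j` is counted once as `⟨i, j⟩` and once as `⟨j, i⟩`
  refine sum_involution (fun p _ => ⟨p.2, p.1⟩) (fun p _ => ?_) (fun p hp _ h => ?_)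
    (fun p hp => ?_) fun _ _ => rfl
  · rw [erase_right_comm]
    exact Chain.add_self _
  · rw [mem_sigma] at hp
    exact ne_of_mem_erase hp.2 (congrArg Sigma.fst h)
  · rw [mem_sigma] at hp ⊢
    exact ⟨mem_of_mem_erase hp.2, mem_erase.2 ⟨(ne_of_mem_erase hp.2).symm, hp.1⟩⟩

theorem bnd_joinC {X Y : Chain} (h : Disjoint (vertsC X) (vertsC Y)) :
    bnd (joinC X Y) = joinC (bnd X) Y + joinC X (bnd Y) := by
  have hst : ∀ s ∈ X.support, ∀ t ∈ Y.support, Disjoint s t := fun s hs t ht =>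
    h.mono (le_sup (f := id) hs) (le_sup (f := id) ht)
  rw [← X.sum_support_single, ← Y.sum_support_single]
  simp only [joinC_sum_left, joinC_sum_right, bnd_sum, ← sum_add_distrib]
  refine sum_congr rfl fun t ht => sum_congr rfl fun s hs => ?_
  rw [joinC_single_one, bnd_single_one, bnd_single_one, bnd_single_one, sbnd_union (hst s hs t ht)]

theorem bnd_lkC (A : Finset ℕ) (K : Chain) : bnd (lkC A K) = lkC A (bnd K) := by
  rw [← K.sum_support_single]
  simp only [lkC_sum, bnd_sum, bnd_single_one, lkC_single_one, sbnd]
  refine sum_congr rfl fun g _ => ?_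
  by_cases hAg : A ⊆ g
  · have hfilter : g.filter (fun i => A ⊆ g.erase i) = g \ A := by
      simp only [subset_erase, hAg, true_and, filter_notMem_eq_sdiff]
    rw [if_pos hAg, bnd_single_one, sbnd, sum_ite, sum_const_zero, add_zero, hfilter]
    exact sum_congr rfl fun i _ => by rw [erase_sdiff_comm]
  · rw [if_neg hAg, bnd_zero]
    exact (sum_eq_zero fun i _ => if_neg fun h => hAg (h.trans (erase_subset i g))).symm

theorem joinC_lkC_add_QC (A : Finset ℕ) (K : Chain) :
    joinC (single A 1) (lkC A K) + QC A K = K := by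
  rw [← K.sum_support_single]
  simp only [lkC_sum, QC_sum, joinC_sum_right, ← sum_add_distrib]
  refine sum_congr rfl fun g _ => ?_
  by_cases hAg : A ⊆ g
  · rw [lkC_single_one, QC_single_one, if_pos hAg, if_pos hAg, joinC_single_one,
      union_sdiff_of_subset hAg, add_zero]
  · rw [lkC_single_one, QC_single_one, if_neg hAg, if_neg hAg, joinC_zero_right, zero_add]

theorem bnd_joinC_sbnd_lkC {A : Finset ℕ} {K : Chain} (hK : bnd K = 0) :
    bnd (joinC (sbnd A) (lkC A K)) = 0 := by
  rw [bnd_joinC ((disjoint_vertsC_lkC A K).mono_left (vertsC_sbnd_subset A)), bnd_sbnd,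
    bnd_lkC, hK, lkC_zero, joinC_zero_right, joinC_zero_left, add_zero]

theorem bnd_QC {A : Finset ℕ} {K : Chain} (hK : bnd K = 0) :
    bnd (QC A K) = joinC (sbnd A) (lkC A K) := by
  have h := congrArg bnd (joinC_lkC_add_QC A K)
  rw [bnd_add, hK, bnd_joinC (by rw [vertsC_single_one]; exact disjoint_vertsC_lkC A K),
    bnd_single_one, bnd_lkC, hK, lkC_zero, joinC_zero_right, add_zero] at h
  exact Chain.eq_of_add_eq_zero h

theorem bnd_cone {a : ℕ} {X : Chain} (ha : a ∉ vertsC X) (hX : bnd X = 0) :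
    bnd (joinC (single {a} 1) X) = X := by
  rw [bnd_joinC (by rwa [vertsC_single_one, disjoint_singleton_left]), bnd_single_one, hX,
    joinC_zero_right, add_zero, sbnd_singleton, joinC_single_empty]

theorem subdivision_preserves_closed_general (K : Chain) (A : Finset ℕ) (a : ℕ)
    (ha : ∀ g ∈ K.support, a ∉ g)
    (hK : bnd K = 0) :
    bnd (subdivC A a K) = 0 := by
  have haK : a ∉ vertsC K := fun h => by
    obtain ⟨g, hg, hag⟩ := mem_sup.1 h
    exact ha g hg hag
  rw [subdivC, bnd_add, bnd_QC hK,
    bnd_cone (fun h => haK (vertsC_joinC_sbnd_lkC_subset A K h)) (bnd_joinC_sbnd_lkC hK),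
    Chain.add_self]

/-- a stellar subdivision at a fresh vertex preserves closedness. -/
theorem subdivision_preserves_closed (K : Chain) (A : Finset ℕ) (a : ℕ)
    (hA : ∃ g ∈ K.support, A ⊆ g) (hA' : A.Nonempty)
    (ha : ∀ g ∈ K.support, a ∉ g)
    (hK : bnd K = 0) :
    bnd (subdivC A a K) = 0 :=
  subdivision_preserves_closed_general K A a ha hK
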